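/- arXiv:2409.18015 — 6 statements merged into one kernel-verified Lean document; each statement's English description precedes it below -/
import Mathlib

section
/- Let n ≥ 1 and let d, P, M : ℤ/nℤ → ℂ be arbitrary. Then the sum over all pairs of sign sequences r, s : ℤ/nℤ → {+1,−1} of the cyclic product ∏_{i=0}^{n−1} (𝕚/4)·(r_i·d_i − s_i·conj(d_i))·(P_i + r_{i+1}·M_i + s_i·conj(M_i) + r_{i+1}·s_i·conj(P_i)) equals the sum over all sign sequences σ : ℤ/nℤ → {+1,−1} of ∏_{i=0}^{n−1} 𝕚·σ_i·(G_i·d_i)^{(σ_i)}, where G_i = M_i if σ_i = σ_{i+1} and G_i = P_i if σ_i ≠ σ_{i+1}. -/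
open Finset

/-- The complex sign `+1`/`-1` attached to a Boolean sign. `true ↔ +1`. -/
noncomputable def sg (b : Bool) : ℂ := if b then 1 else -1

/-- `w^{(ε)}`: the identity if `ε = +1` (i.e. `true`), complex conjugation if `ε = -1`. -/
noncomputable def cnj (b : Bool) (w : ℂ) : ℂ := if b then w else (starRingEnd ℂ) w

/-! ### Auxiliary machinery: 2×2 transfer "matrices" indexed by `Bool`. -/

/-- The intertwining matrix `C = [[1,1],[-1,1]]` (rows/cols indexed by `true, false`). -/
noncomputable def Cm (a b : Bool) : ℂ := if a then 1 else if b then -1 else 1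

/-- Entries of the ordered product `f 0 * f 1 * ⋯ * f (k-1)` of 2×2 matrices. -/
noncomputable def pw (f : ℕ → Bool → Bool → ℂ) : ℕ → Bool → Bool → ℂ
  | 0 => fun a b => if a = b then 1 else 0
  | k + 1 => fun a b => ∑ c : Bool, pw f k a c * f k c b

/-- If `f j * C = C * g j` for all `j`, then the same holds for the ordered products. -/
lemma pw_conj (f g : ℕ → Bool → Bool → ℂ)
    (h : ∀ j a b, (∑ c : Bool, f j a c * Cm c b) = ∑ c : Bool, Cm a c * g j c b) :
    ∀ k a b, (∑ c : Bool, pw f k a c * Cm c b) = ∑ c : Bool, Cm a c * pw g k c b := by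
  intro k a b
  induction k generalizing b with
  | zero => cases a <;> cases b <;> simp [pw, Cm, Fintype.sum_bool]
  | succ k ih =>
    have h1 := h k true b
    have h2 := h k false b
    have i1 := ih true
    have i2 := ih false
    simp only [pw, Fintype.sum_bool] at h1 h2 i1 i2 ⊢
    linear_combination pw f k a true * h1 + pw f k a false * h2 +
      i1 * g k true b + i2 * g k false b

/-- Conjugate matrices have equal traces, for ordered products. -/
lemma pw_trace (f g : ℕ → Bool → Bool → ℂ)
    (h : ∀ j a b, (∑ c : Bool, f j a c * Cm c b) = ∑ c : Bool, Cm a c * g j c b) (n : ℕ) :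
    ∑ a : Bool, pw f n a a = ∑ a : Bool, pw g n a a := by
  have Ett := pw_conj f g h n true true
  have Etf := pw_conj f g h n true false
  have Eft := pw_conj f g h n false true
  have Eff := pw_conj f g h n false false
  simp only [Fintype.sum_bool, Cm, if_true, if_false] at Ett Etf Eft Eff ⊢
  norm_num at Ett Etf Eft Eff
  linear_combination (Ett + Etf - Eft + Eff) / 2

/-- Entries of the ordered matrix product as a sum over paths with pinned endpoints. -/
lemma pw_eq_sum (f : ℕ → Bool → Bool → ℂ) :
    ∀ (k : ℕ) (a b : Bool), pw f k a b =
      ∑ r : Fin (k + 1) → Bool,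
        (if r 0 = a then (1:ℂ) else 0) * (if r (Fin.last k) = b then 1 else 0) *
          ∏ j : Fin k, f (j : ℕ) (r j.castSucc) (r j.succ) := by
  intro k
  induction k with
  | zero =>
    intro a b
    rw [← Equiv.sum_comp (Equiv.funUnique (Fin 1) Bool).symm]
    cases a <;> cases b <;>
      simp [pw, Fintype.sum_bool, Equiv.funUnique, Fin.last]
  | succ k ih =>
    intro a b
    rw [← Equiv.sum_comp (Fin.snocEquiv (fun _ : Fin (k+2) => Bool))]
    rw [Fintype.sum_prod_type]
    have key : ∀ (c : Bool) (r' : Fin (k+1) → Bool),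
        (if (Fin.snoc (α := fun _ => Bool) r' c) 0 = a then (1:ℂ) else 0) *
            (if (Fin.snoc (α := fun _ => Bool) r' c) (Fin.last (k+1)) = b then 1 else 0) *
          ∏ j : Fin (k+1), f (j:ℕ) ((Fin.snoc (α := fun _ => Bool) r' c) j.castSucc)
            ((Fin.snoc (α := fun _ => Bool) r' c) j.succ)
        = (if r' 0 = a then (1:ℂ) else 0) * (if c = b then 1 else 0) *
            ((∏ j : Fin k, f (j:ℕ) (r' j.castSucc) (r' j.succ)) *
              f k (r' (Fin.last k)) c) := by
      intro c r'
      have h0 : (Fin.snoc (α := fun _ => Bool) r' c) 0 = r' 0 := by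
        rw [show (0 : Fin (k+2)) = Fin.castSucc 0 by simp, Fin.snoc_castSucc]
      rw [h0, Fin.snoc_last, Fin.prod_univ_castSucc]
      congr 1
      congr 1
      · refine Finset.prod_congr rfl fun j _ => ?_
        rw [Fin.succ_castSucc, Fin.snoc_castSucc, Fin.snoc_castSucc, Fin.coe_castSucc]
      · rw [Fin.succ_last, Fin.snoc_last, Fin.snoc_castSucc, Fin.val_last]
    simp only [Fin.snocEquiv_apply]
    simp only [key]
    simp only [pw, ih]
    simp only [Finset.sum_mul]
    rw [Finset.sum_comm]
    conv_rhs => rw [Finset.sum_comm]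
    refine Finset.sum_congr rfl fun r' _ => ?_
    rw [Fintype.sum_bool, Fintype.sum_bool]
    cases hb : r' (Fin.last k) <;> cases b <;> simp

/-- The natural equivalence `Fin n ≃ ZMod n`. -/
noncomputable def finZmodEquiv (n : ℕ) [NeZero n] : Fin n ≃ ZMod n where
  toFun j := ((j : ℕ) : ZMod n)
  invFun i := ⟨i.val, ZMod.val_lt i⟩
  left_inv j := by
    ext
    simp [ZMod.val_cast_of_lt j.isLt]
  right_inv i := ZMod.natCast_rightInverse i

/-- A cyclic sum over `ZMod n` of products of transfer-matrix entries is the trace of the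
ordered product of the transfer matrices. -/
lemma cyclic_sum (n : ℕ) [NeZero n] (F : ZMod n → Bool → Bool → ℂ) :
    (∑ ρ : ZMod n → Bool, ∏ i : ZMod n, F i (ρ i) (ρ (i + 1)))
      = ∑ a : Bool, pw (fun j => F (j : ℕ)) n a a := by
  obtain ⟨m, rfl⟩ : ∃ m, n = m + 1 := Nat.exists_eq_succ_of_ne_zero (NeZero.ne n)
  have step1 : (∑ a : Bool, pw (fun j => F (j : ℕ)) (m+1) a a)
      = ∑ r : Fin ((m+1) + 1) → Bool,
          (if r 0 = r (Fin.last (m+1)) then (1:ℂ) else 0) *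
            ∏ j : Fin (m+1), F ((j : ℕ) : ZMod (m+1)) (r j.castSucc) (r j.succ) := by
    simp only [pw_eq_sum]
    rw [Finset.sum_comm]
    refine Finset.sum_congr rfl fun r _ => ?_
    rw [Fintype.sum_bool]
    cases h0 : r 0 <;> cases hl : r (Fin.last (m+1)) <;> simp [h0, hl]
  rw [step1]
  rw [← Equiv.sum_comp (Fin.snocEquiv (fun _ : Fin ((m+1)+1) => Bool)), Fintype.sum_prod_type]
  simp only [Fin.snocEquiv_apply]
  have h0 : ∀ (r' : Fin (m+1) → Bool) (c : Bool),
      (Fin.snoc (α := fun _ => Bool) r' c) 0 = r' 0 := by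
    intro r' c
    rw [show (0 : Fin ((m+1)+1)) = Fin.castSucc 0 by simp, Fin.snoc_castSucc]
  have step2 : ∀ (c : Bool) (r' : Fin (m+1) → Bool),
      (if (Fin.snoc (α := fun _ => Bool) r' c) 0 =
          (Fin.snoc (α := fun _ => Bool) r' c) (Fin.last (m+1)) then (1:ℂ) else 0) *
          ∏ j : Fin (m+1), F ((j : ℕ) : ZMod (m+1))
            ((Fin.snoc (α := fun _ => Bool) r' c) j.castSucc)
            ((Fin.snoc (α := fun _ => Bool) r' c) j.succ)
      = (if r' 0 = c then (1:ℂ) else 0) *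
          ∏ j : Fin (m+1), F ((j : ℕ) : ZMod (m+1)) (r' j)
            ((Fin.snoc (α := fun _ => Bool) r' c) j.succ) := by
    intro c r'
    rw [h0, Fin.snoc_last]
    congr 1
    exact Finset.prod_congr rfl fun j _ => by rw [Fin.snoc_castSucc]
  simp only [step2]
  rw [Finset.sum_comm]
  rw [← Equiv.sum_comp (Equiv.arrowCongr (finZmodEquiv (m+1)).symm (Equiv.refl Bool))]
  refine Finset.sum_congr rfl fun ρ _ => ?_
  set r' : Fin (m+1) → Bool := fun j => ρ ((j : ℕ) : ZMod (m+1)) with hr'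
  have harr : (Equiv.arrowCongr (finZmodEquiv (m+1)).symm (Equiv.refl Bool)) ρ = r' := by
    funext j
    simp [finZmodEquiv, Equiv.arrowCongr, r']
  rw [harr]
  rw [Fintype.sum_bool]
  have hsnoc : ∀ (c : Bool) (j : Fin (m+1)), c = r' 0 →
      (Fin.snoc (α := fun _ => Bool) r' c) j.succ = ρ (((j : ℕ) : ZMod (m+1)) + 1) := by
    intro c j hc
    rcases lt_or_eq_of_le (Nat.succ_le_of_lt j.isLt) with h | h
    · have : (j.succ : Fin ((m+1)+1)) = Fin.castSucc ⟨(j : ℕ) + 1, h⟩ := by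
        ext; simp
      rw [this, Fin.snoc_castSucc]
      simp only [hr']
      norm_num
    · have : (j.succ : Fin ((m+1)+1)) = Fin.last (m+1) := by ext; simpa using h
      rw [this, Fin.snoc_last, hc]
      have hn1 : (((j : ℕ) : ZMod (m+1)) + 1) = 0 := by
        have hj : ((j : ℕ) + 1 : ℕ) = m + 1 := h
        calc ((j : ℕ) : ZMod (m+1)) + 1 = (((j : ℕ) + 1 : ℕ) : ZMod (m+1)) := by
              push_cast; ring
          _ = ((m + 1 : ℕ) : ZMod (m+1)) := by rw [hj]
          _ = 0 := ZMod.natCast_self _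
      rw [hn1]
      simp [hr']
  have hprod : ∀ c : Bool, c = r' 0 →
      (∏ i : ZMod (m+1), F i (ρ i) (ρ (i + 1)))
        = ∏ j : Fin (m+1), F ((j : ℕ) : ZMod (m+1)) (r' j)
            ((Fin.snoc (α := fun _ => Bool) r' c) j.succ) := by
    intro c hc
    rw [← Equiv.prod_comp (finZmodEquiv (m+1)) (fun i => F i (ρ i) (ρ (i + 1)))]
    refine Finset.prod_congr rfl fun j _ => ?_
    rw [hsnoc c j hc]
    simp [finZmodEquiv, r']
  cases hc : r' 0 <;> simpa using hprod _ hc.symm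

/-- The `F`-side local transfer matrix (with the `s`-sign already summed out). -/
noncomputable def Fm (d P M : ℂ) (a b : Bool) : ℂ :=
  ∑ c : Bool, (Complex.I / 4) * (sg a * d - sg c * (starRingEnd ℂ) d) *
    (P + sg b * M + sg c * (starRingEnd ℂ) M + sg b * sg c * (starRingEnd ℂ) P)

/-- The `G`-side local transfer matrix. -/
noncomputable def Gm (d P M : ℂ) (a b : Bool) : ℂ :=
  Complex.I * sg a * cnj a ((if a = b then M else P) * d)

/-- The pointwise intertwining identity `Fm * C = C * Gm`. -/
lemma FG (d P M : ℂ) (a b : Bool) :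
    ∑ c : Bool, Fm d P M a c * Cm c b = ∑ c : Bool, Cm a c * Gm d P M c b := by
  cases a <;> cases b <;>
    simp [Fm, Gm, Cm, sg, cnj, Fintype.sum_bool] <;> ring

/-- folded dimers, key algebraic identity: for `n ≥ 1` and arbitrary
`d, P, M : ℤ/nℤ → ℂ`, summing the cyclic product
`∏ᵢ (𝕚/4)·(rᵢdᵢ − sᵢ conj dᵢ)·(Pᵢ + r_{i+1}Mᵢ + sᵢ conj Mᵢ + r_{i+1}sᵢ conj Pᵢ)`
over all sign sequences `r, s : ℤ/nℤ → {±1}` equals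
`∑_σ ∏ᵢ 𝕚 σᵢ (Gᵢ dᵢ)^{(σᵢ)}` with `Gᵢ = Mᵢ` when `σᵢ = σ_{i+1}` and `Gᵢ = Pᵢ` otherwise. -/
theorem folded_trace_identity (n : ℕ) (hn : 1 ≤ n) [NeZero n] (d P M : ZMod n → ℂ) :
    (∑ r : ZMod n → Bool, ∑ s : ZMod n → Bool,
      ∏ i : ZMod n,
        (Complex.I / 4) * (sg (r i) * d i - sg (s i) * (starRingEnd ℂ) (d i)) *
          (P i + sg (r (i + 1)) * M i + sg (s i) * (starRingEnd ℂ) (M i) +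
            sg (r (i + 1)) * sg (s i) * (starRingEnd ℂ) (P i)))
    =
    ∑ σ : ZMod n → Bool, ∏ i : ZMod n,
        Complex.I * sg (σ i) *
          cnj (σ i) ((if σ i = σ (i + 1) then M i else P i) * d i) := by
  classical
  have hA : ∀ r : ZMod n → Bool,
      (∑ s : ZMod n → Bool, ∏ i : ZMod n,
        (Complex.I / 4) * (sg (r i) * d i - sg (s i) * (starRingEnd ℂ) (d i)) *
          (P i + sg (r (i + 1)) * M i + sg (s i) * (starRingEnd ℂ) (M i) +
            sg (r (i + 1)) * sg (s i) * (starRingEnd ℂ) (P i)))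
      = ∏ i : ZMod n, Fm (d i) (P i) (M i) (r i) (r (i + 1)) := by
    intro r
    exact (Fintype.prod_sum (fun i c =>
      (Complex.I / 4) * (sg (r i) * d i - sg c * (starRingEnd ℂ) (d i)) *
        (P i + sg (r (i + 1)) * M i + sg c * (starRingEnd ℂ) (M i) +
          sg (r (i + 1)) * sg c * (starRingEnd ℂ) (P i)))).symm
  calc (∑ r : ZMod n → Bool, ∑ s : ZMod n → Bool,
      ∏ i : ZMod n,
        (Complex.I / 4) * (sg (r i) * d i - sg (s i) * (starRingEnd ℂ) (d i)) *
          (P i + sg (r (i + 1)) * M i + sg (s i) * (starRingEnd ℂ) (M i) +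
            sg (r (i + 1)) * sg (s i) * (starRingEnd ℂ) (P i)))
      = ∑ r : ZMod n → Bool, ∏ i : ZMod n, Fm (d i) (P i) (M i) (r i) (r (i + 1)) :=
        Finset.sum_congr rfl fun r _ => hA r
    _ = ∑ a : Bool, pw (fun j => Fm (d (j : ℕ)) (P (j : ℕ)) (M (j : ℕ))) n a a :=
        cyclic_sum n (fun i => Fm (d i) (P i) (M i))
    _ = ∑ a : Bool, pw (fun j => Gm (d (j : ℕ)) (P (j : ℕ)) (M (j : ℕ))) n a a :=
        pw_trace _ _ (fun j a b => FG (d (j : ℕ)) (P (j : ℕ)) (M (j : ℕ)) a b) n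
    _ = ∑ σ : ZMod n → Bool, ∏ i : ZMod n, Gm (d i) (P i) (M i) (σ i) (σ (i + 1)) :=
        (cyclic_sum n (fun i => Gm (d i) (P i) (M i))).symm
    _ = ∑ σ : ZMod n → Bool, ∏ i : ZMod n,
          Complex.I * sg (σ i) *
            cnj (σ i) ((if σ i = σ (i + 1) then M i else P i) * d i) := rfl
end

section
/- Let n ≥ 1 and let d, P, M : ℤ/nℤ → ℂ be arbitrary. Then the sum over all pairs of sign sequences r, s : ℤ/nℤ → {+1,−1} of the cyclic product ∏_{i=0}^{n−1} (r_i·𝕚/4)·(r_i·d_i − s_i·conj(d_i))·(P_i + r_{i+1}·M_i + s_i·conj(M_i) + r_{i+1}·s_i·conj(P_i)) equals the sum over all sign sequences σ : ℤ/nℤ → {+1,−1} of ∏_{i=0}^{n−1} 𝕚·σ_i·(H_i·d_i)^{(σ_i)}, where H_i = P_i if σ_i = σ_{i+1} and H_i = M_i if σ_i ≠ σ_{i+1}. -/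
open Finset

/-- Hadamard character: `cc a σ = 1` if `σ = true`, else `sg a`. -/
noncomputable def cc (a σ : Bool) : ℂ := if σ then 1 else sg a

lemma sum_fun_prod {ι β : Type*} [Fintype ι] [DecidableEq ι] [Fintype β] [DecidableEq β]
    (f : ι → β → ℂ) : ∑ s : ι → β, ∏ i, f i (s i) = ∏ i, ∑ b, f i b := by
  rw [Finset.prod_univ_sum, Fintype.piFinset_univ]

lemma cc_orth (σ τ : Bool) : (∑ a : Bool, cc a σ * cc a τ) = if σ = τ then (2:ℂ) else 0 := by
  cases σ <;> cases τ <;> simp [cc, sg] <;> ring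

lemma key_pointwise (a b : Bool) (d P M : ℂ) :
    (∑ c : Bool, (sg a * Complex.I / 4) * (sg a * d - sg c * (starRingEnd ℂ) d) *
      (P + sg b * M + sg c * (starRingEnd ℂ) M + sg b * sg c * (starRingEnd ℂ) P))
    = (1:ℂ)/2 * ∑ q : Bool × Bool, cc a q.1 * cc b q.2 *
        (Complex.I * sg q.1 * cnj q.1 ((if q.1 = q.2 then P else M) * d)) := by
  cases a <;> cases b <;>
    simp [sg, cc, cnj, Fintype.sum_prod_type, map_mul] <;> ring

lemma transfer (n : ℕ) [NeZero n] (h : ZMod n → Bool → Bool → ℂ) :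
    ∑ r : ZMod n → Bool, ∏ i : ZMod n,
        ((1:ℂ)/2 * ∑ q : Bool × Bool, cc (r i) q.1 * cc (r (i+1)) q.2 * h i q.1 q.2)
    = ∑ σ : ZMod n → Bool, ∏ i : ZMod n, h i (σ i) (σ (i+1)) := by
  classical
  have step1 : ∀ r : ZMod n → Bool,
      (∏ i : ZMod n, ((1:ℂ)/2 * ∑ q : Bool × Bool, cc (r i) q.1 * cc (r (i+1)) q.2 * h i q.1 q.2))
      = ∑ p : ZMod n → Bool × Bool, ∏ i : ZMod n,
          ((1:ℂ)/2 * h i (p i).1 (p i).2) * (cc (r i) (p i).1 * cc (r (i+1)) (p i).2) := by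
    intro r
    simp_rw [Finset.mul_sum]
    rw [Finset.prod_univ_sum, Fintype.piFinset_univ]
    refine Finset.sum_congr rfl fun p _ => Finset.prod_congr rfl fun i _ => by ring
  simp_rw [step1]
  rw [Finset.sum_comm]
  have step2 : ∀ p : ZMod n → Bool × Bool,
      (∑ r : ZMod n → Bool, ∏ i : ZMod n,
        ((1:ℂ)/2 * h i (p i).1 (p i).2) * (cc (r i) (p i).1 * cc (r (i+1)) (p i).2))
      = ∏ i : ZMod n, (((1:ℂ)/2 * h i (p i).1 (p i).2) *
          if (p i).1 = (p (i-1)).2 then (2:ℂ) else 0) := by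
    intro p
    simp_rw [Finset.prod_mul_distrib, ← Finset.mul_sum]
    have hr : (∑ r : ZMod n → Bool,
        (∏ i : ZMod n, cc (r i) (p i).1) * ∏ i : ZMod n, cc (r (i+1)) (p i).2)
        = ∏ i : ZMod n, (if (p i).1 = (p (i-1)).2 then (2:ℂ) else 0) := by
      have hsplit : ∀ r : ZMod n → Bool,
          (∏ i : ZMod n, cc (r i) (p i).1) * ∏ i : ZMod n, cc (r (i+1)) (p i).2
          = ∏ i : ZMod n, (cc (r i) (p i).1 * cc (r i) (p (i-1)).2) := by
        intro r
        rw [Finset.prod_mul_distrib]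
        congr 1
        exact Fintype.prod_equiv (Equiv.addRight (1 : ZMod n))
          (fun i => cc (r (i+1)) (p i).2) (fun j => cc (r j) (p (j-1)).2)
          (fun i => by simp)
      simp_rw [hsplit]
      rw [sum_fun_prod (fun i a => cc a (p i).1 * cc a (p (i-1)).2)]
      exact Finset.prod_congr rfl fun i _ => cc_orth _ _
    rw [hr, ← Finset.prod_mul_distrib]
  simp_rw [step2]
  rw [← Finset.sum_filter_of_ne
    (p := fun p : ZMod n → Bool × Bool => ∀ i, (p i).1 = (p (i-1)).2)
    (fun p _ hp => by
      by_contra hc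
      obtain ⟨i, hi⟩ := not_forall.1 hc
      exact hp (Finset.prod_eq_zero (Finset.mem_univ i) (by simp [hi])))]
  refine Finset.sum_nbij' (fun p => fun i => (p i).1) (fun σ => fun i => (σ i, σ (i+1)))
    (fun p _ => Finset.mem_univ _) ?_ ?_ (fun σ _ => rfl) ?_
  · intro σ _
    refine Finset.mem_filter.mpr ⟨Finset.mem_univ _, fun i => ?_⟩
    simp
  · intro p hp
    have hcond := (Finset.mem_filter.mp hp).2
    funext i
    have h2 : (p (i+1)).1 = (p i).2 := by
      have := hcond (i+1)
      simpa using this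
    exact Prod.ext rfl h2
  · intro p hp
    have hcond := (Finset.mem_filter.mp hp).2
    refine Finset.prod_congr rfl fun i _ => ?_
    have h2 : (p (i+1)).1 = (p i).2 := by
      have := hcond (i+1)
      simpa using this
    show (1:ℂ)/2 * h i (p i).1 (p i).2 * (if (p i).1 = (p (i-1)).2 then (2:ℂ) else 0)
      = h i (p i).1 ((p (i+1)).1)
    rw [if_pos (hcond i), h2]
    ring

/-- shifted dimers, key algebraic identity: for `n ≥ 1` and arbitrary
`d, P, M : ℤ/nℤ → ℂ`, summing the cyclic product
`∏ᵢ (rᵢ𝕚/4)·(rᵢdᵢ − sᵢ conj dᵢ)·(Pᵢ + r_{i+1}Mᵢ + sᵢ conj Mᵢ + r_{i+1}sᵢ conj Pᵢ)`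
over all sign sequences `r, s : ℤ/nℤ → {±1}` equals
`∑_σ ∏ᵢ 𝕚 σᵢ (Hᵢ dᵢ)^{(σᵢ)}` with `Hᵢ = Pᵢ` when `σᵢ = σ_{i+1}` and `Hᵢ = Mᵢ` otherwise. -/
theorem shifted_trace_identity (n : ℕ) (hn : 1 ≤ n) [NeZero n] (d P M : ZMod n → ℂ) :
    (∑ r : ZMod n → Bool, ∑ s : ZMod n → Bool,
      ∏ i : ZMod n,
        (sg (r i) * Complex.I / 4) * (sg (r i) * d i - sg (s i) * (starRingEnd ℂ) (d i)) *
          (P i + sg (r (i + 1)) * M i + sg (s i) * (starRingEnd ℂ) (M i) +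
            sg (r (i + 1)) * sg (s i) * (starRingEnd ℂ) (P i)))
    =
    ∑ σ : ZMod n → Bool, ∏ i : ZMod n,
        Complex.I * sg (σ i) *
          cnj (σ i) ((if σ i = σ (i + 1) then P i else M i) * d i) := by
  have hs : ∀ r : ZMod n → Bool,
      (∑ s : ZMod n → Bool, ∏ i : ZMod n,
        (sg (r i) * Complex.I / 4) * (sg (r i) * d i - sg (s i) * (starRingEnd ℂ) (d i)) *
          (P i + sg (r (i + 1)) * M i + sg (s i) * (starRingEnd ℂ) (M i) +
            sg (r (i + 1)) * sg (s i) * (starRingEnd ℂ) (P i)))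
      = ∏ i : ZMod n, ((1:ℂ)/2 * ∑ q : Bool × Bool, cc (r i) q.1 * cc (r (i+1)) q.2 *
          (Complex.I * sg q.1 * cnj q.1 ((if q.1 = q.2 then P i else M i) * d i))) := by
    intro r
    rw [sum_fun_prod (fun i c =>
      (sg (r i) * Complex.I / 4) * (sg (r i) * d i - sg c * (starRingEnd ℂ) (d i)) *
        (P i + sg (r (i + 1)) * M i + sg c * (starRingEnd ℂ) (M i) +
          sg (r (i + 1)) * sg c * (starRingEnd ℂ) (P i)))]
    exact Finset.prod_congr rfl fun i _ => key_pointwise _ _ _ _ _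
  simp_rw [hs]
  exact transfer n (fun i σ τ => Complex.I * sg σ * cnj σ ((if σ = τ then P i else M i) * d i))
end

section
/- Let n ≥ 1 and let a, b : ℤ/nℤ → ℂ be arbitrary. Then the sum over all functions j : ℤ/nℤ → {0,1} of the cyclic product ∏_{i=0}^{n−1} (−1)^{j_i}·(a_i + (−1)^{j_{i+1}}·b_i) equals 2^n · ∏_{i=0}^{n−1} b_i. -/
open Finset

/-- `(-1)^j` for `j ∈ {0,1}` encoded as a Boolean (`true ↔ j = 1`). -/
noncomputable def pm (b : Bool) : ℂ := if b then -1 else 1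

lemma pm_sq (b : Bool) : pm b * pm b = 1 := by cases b <;> simp [pm]

/-- shifted dimers, layer-label collapse: for `n ≥ 1` and arbitrary
`a, b : ZMod n → ℂ`, summing the cyclic product `∏ᵢ (−1)^{jᵢ}·(aᵢ + (−1)^{j_{i+1}}·bᵢ)`
over all `j : ZMod n → {0,1}` equals `2ⁿ · ∏ᵢ bᵢ`. -/
theorem layer_sum_collapse (n : ℕ) (hn : 1 ≤ n) [NeZero n] (a b : ZMod n → ℂ) :
    (∑ j : ZMod n → Bool, ∏ i : ZMod n, pm (j i) * (a i + pm (j (i + 1)) * b i))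
      = 2 ^ n * ∏ i : ZMod n, b i := by
  have key : ∀ j : ZMod n → Bool,
      (∏ i : ZMod n, pm (j i) * (a i + pm (j (i + 1)) * b i))
        = ∏ i : ZMod n, (pm (j (i + 1)) * a i + b i) := by
    intro j
    rw [prod_mul_distrib]
    have h1 : (∏ i : ZMod n, pm (j i)) = ∏ i : ZMod n, pm (j (i + 1)) :=
      (Fintype.prod_equiv (Equiv.addRight (1 : ZMod n)) _ _ (fun i => rfl)).symm
    rw [h1, ← prod_mul_distrib]
    refine Finset.prod_congr rfl fun i _ => ?_
    have := pm_sq (j (i + 1))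
    rw [mul_add, ← mul_assoc, this, one_mul]
  simp only [key]
  have h2 : (∑ j : ZMod n → Bool, ∏ i : ZMod n, (pm (j (i + 1)) * a i + b i))
      = ∑ j : ZMod n → Bool, ∏ i : ZMod n, (pm (j i) * a i + b i) := by
    apply Fintype.sum_equiv (Equiv.arrowCongr (Equiv.addRight (1 : ZMod n)) (Equiv.refl Bool)).symm
    intro j
    rfl
  rw [h2, ← Fintype.prod_sum fun i (c : Bool) => pm c * a i + b i]
  have h3 : ∀ i : ZMod n, (∑ c : Bool, (pm c * a i + b i)) = 2 * b i := by
    intro i; simp [pm]; ring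
  simp only [h3]
  rw [prod_mul_distrib, prod_const, Finset.card_univ, ZMod.card]
end

section
/- Let k ≥ 1 and let A_0, …, A_{k−1}, B_0, …, B_{k−1} be 2×2 complex matrices with det(B_l) = 1 for every l. Then the sum over all functions i, j : {0,…,k−1} → {0,1} of (−1)^{Σ_{l}(i_l + j_l)} · ∏_{l=0}^{k−1} (A_l)_{i_l, j_l} · (B_l)_{1−i_{l+1}, 1−j_l} (with i_k = i_0) equals the trace of the product A_0·B_0^{−1}·A_1·B_1^{−1}·⋯·A_{k−1}·B_{k−1}^{−1}. -/
open Finset Matrix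

lemma entry_lemma : ∀ (n : ℕ) (M : Fin n → Matrix (Fin 2) (Fin 2) ℂ) (a b : Fin 2),
    (((List.finRange n).map M).prod) a b
      = ∑ q : Fin (n+1) → Fin 2,
          if q 0 = a ∧ q (Fin.last n) = b then ∏ l : Fin n, M l (q l.castSucc) (q l.succ) else 0 := by
  intro n
  induction n with
  | zero =>
    intro M a b
    have key : ∀ q : Fin 1 → Fin 2,
        (if q 0 = a ∧ q (Fin.last 0) = b then (∏ l : Fin 0, M l (q l.castSucc) (q l.succ)) else 0)
        = if q 0 = a then (if a = b then (1:ℂ) else 0) else 0 := by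
      intro q
      have hl : q (Fin.last 0) = q 0 := rfl
      by_cases h1 : q 0 = a
      · rw [if_pos h1]
        by_cases h2 : a = b
        · rw [if_pos ⟨h1, hl.trans (h1.trans h2)⟩, if_pos h2]
          simp
        · rw [if_neg (fun h => h2 (h1.symm.trans (hl.symm.trans h.2))), if_neg h2]
      · rw [if_neg (fun h => h1 h.1), if_neg h1]
    rw [Finset.sum_congr rfl (fun q _ => key q)]
    rw [← Equiv.sum_comp (Equiv.funUnique (Fin 1) (Fin 2)).symm
      (fun q : Fin 1 → Fin 2 => if q 0 = a then (if a = b then (1:ℂ) else 0) else 0)]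
    have : ∀ x : Fin 2, ((Equiv.funUnique (Fin 1) (Fin 2)).symm x) 0 = x := fun _ => rfl
    simp only [this]
    rw [Finset.sum_ite_eq' univ a, if_pos (Finset.mem_univ a)]
    simp [Matrix.one_apply]
  | succ n ih =>
    intro M a b
    rw [List.finRange_succ, List.map_cons, List.prod_cons, List.map_map,
      Matrix.mul_apply]
    have hih : ∀ c, ((List.map (M ∘ Fin.succ) (List.finRange n)).prod) c b
        = ∑ q : Fin (n+1) → Fin 2, if q 0 = c ∧ q (Fin.last n) = b then
            ∏ l : Fin n, (M ∘ Fin.succ) l (q l.castSucc) (q l.succ) else 0 := fun c => ih _ c b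
    simp only [hih, Finset.mul_sum]
    conv_lhs => rw [Finset.sum_comm]
    conv_rhs => rw [← Equiv.sum_comp (Fin.consEquiv (fun _ : Fin (n+2) => Fin 2)),
      Fintype.sum_prod_type, Finset.sum_comm]
    refine Finset.sum_congr rfl fun p _ => ?_
    simp only [Fin.consEquiv_apply]
    have hlast : ∀ c : Fin 2,
        (Fin.cons c p : Fin (n+2) → Fin 2) (Fin.last (n+1)) = p (Fin.last n) := by
      intro c; rw [← Fin.succ_last, Fin.cons_succ]
    have h0 : ∀ c : Fin 2, (Fin.cons c p : Fin (n+2) → Fin 2) 0 = c := fun c => rfl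
    have hprod : ∀ c : Fin 2, (∏ l : Fin (n+1), M l ((Fin.cons c p : Fin (n+2) → Fin 2) l.castSucc)
          ((Fin.cons c p : Fin (n+2) → Fin 2) l.succ))
        = M 0 c (p 0) * ∏ l : Fin n, (M ∘ Fin.succ) l (p l.castSucc) (p l.succ) := by
      intro c
      rw [Fin.prod_univ_succ]
      congr 1
    calc (∑ c : Fin 2, M 0 a c *
            if p 0 = c ∧ p (Fin.last n) = b then
              ∏ l : Fin n, (M ∘ Fin.succ) l (p l.castSucc) (p l.succ) else 0)
        = ∑ c : Fin 2, if p 0 = c then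
            (if p (Fin.last n) = b then
              M 0 a c * ∏ l : Fin n, (M ∘ Fin.succ) l (p l.castSucc) (p l.succ) else 0) else 0 := by
          refine Finset.sum_congr rfl fun c _ => ?_
          simp only [mul_ite, mul_zero, ite_and]
      _ = if p (Fin.last n) = b then
            M 0 a (p 0) * ∏ l : Fin n, (M ∘ Fin.succ) l (p l.castSucc) (p l.succ) else 0 := by
          rw [Finset.sum_ite_eq]; simp
      _ = ∑ c : Fin 2, if (Fin.cons c p : Fin (n+2) → Fin 2) 0 = a ∧
              (Fin.cons c p : Fin (n+2) → Fin 2) (Fin.last (n+1)) = b then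
            ∏ l : Fin (n+1), M l ((Fin.cons c p : Fin (n+2) → Fin 2) l.castSucc)
              ((Fin.cons c p : Fin (n+2) → Fin 2) l.succ) else 0 := by
          have key2 : ∀ c : Fin 2,
              (if (Fin.cons c p : Fin (n+2) → Fin 2) 0 = a ∧
                  (Fin.cons c p : Fin (n+2) → Fin 2) (Fin.last (n+1)) = b then
                ∏ l : Fin (n+1), M l ((Fin.cons c p : Fin (n+2) → Fin 2) l.castSucc)
                  ((Fin.cons c p : Fin (n+2) → Fin 2) l.succ) else 0)
              = if c = a then (if p (Fin.last n) = b then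
                  M 0 c (p 0) * ∏ l : Fin n, (M ∘ Fin.succ) l (p l.castSucc) (p l.succ)
                  else 0) else 0 := by
            intro c
            rw [hprod c, hlast c, h0 c, ite_and]
          rw [Finset.sum_congr rfl (fun c _ => key2 c), Finset.sum_ite_eq']
          simp

lemma snoc_succ (k : ℕ) [NeZero k] (i : Fin k → Fin 2) (l : Fin k) :
    (Fin.snoc i (i 0) : Fin (k+1) → Fin 2) l.succ = i (l + 1) := by
  have hk : 1 ≤ k := Nat.one_le_iff_ne_zero.mpr (NeZero.ne k)
  by_cases h : (l : ℕ) + 1 < k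
  · have h2 : 2 ≤ k := by omega
    have hcast : (l.succ : Fin (k+1)) = Fin.castSucc ⟨(l : ℕ) + 1, h⟩ := by
      ext; simp
    rw [hcast, Fin.snoc_castSucc]
    congr 1
    ext
    simp [Fin.val_add, Fin.val_one']
    rw [Nat.mod_eq_of_lt h]
  · have hl : (l : ℕ) = k - 1 := by have := l.isLt; omega
    have hlast : (l.succ : Fin (k+1)) = Fin.last k := by
      ext; simp [hl]; omega
    rw [hlast, Fin.snoc_last]
    congr 1
    ext
    simp [Fin.val_add, Fin.val_one', hl]
    rw [Nat.sub_add_cancel hk, Nat.mod_self]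

lemma snoc_eq (k : ℕ) [NeZero k] (q : Fin (k+1) → Fin 2) (hq : q (Fin.last k) = q 0) :
    (Fin.snoc (fun l : Fin k => q l.castSucc) (q (Fin.castSucc 0)) : Fin (k+1) → Fin 2) = q := by
  funext m
  refine Fin.lastCases ?_ (fun l => ?_) m
  · rw [Fin.snoc_last, hq]
    rfl
  · rw [Fin.snoc_castSucc]

lemma trace_cyc (k : ℕ) [NeZero k] (M : Fin k → Matrix (Fin 2) (Fin 2) ℂ) :
    Matrix.trace (((List.finRange k).map M).prod)
      = ∑ i : Fin k → Fin 2, ∏ l : Fin k, M l (i l) (i (l + 1)) := by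
  rw [Matrix.trace]
  simp only [Matrix.diag_apply]
  have h1 : ∀ a : Fin 2, (((List.finRange k).map M).prod) a a
      = ∑ q : Fin (k+1) → Fin 2,
          if q 0 = a ∧ q (Fin.last k) = a then ∏ l : Fin k, M l (q l.castSucc) (q l.succ) else 0 :=
    fun a => entry_lemma k M a a
  simp only [h1]
  rw [Finset.sum_comm]
  have h2 : ∀ q : Fin (k+1) → Fin 2,
      (∑ a : Fin 2, if q 0 = a ∧ q (Fin.last k) = a then
        ∏ l : Fin k, M l (q l.castSucc) (q l.succ) else 0)
      = if q (Fin.last k) = q 0 then ∏ l : Fin k, M l (q l.castSucc) (q l.succ) else 0 := by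
    intro q
    have : ∀ a : Fin 2, (if q 0 = a ∧ q (Fin.last k) = a then
        ∏ l : Fin k, M l (q l.castSucc) (q l.succ) else 0)
        = if q 0 = a then (if q (Fin.last k) = a then
            ∏ l : Fin k, M l (q l.castSucc) (q l.succ) else 0) else 0 := fun a => ite_and _ _ _ _
    rw [Finset.sum_congr rfl (fun a _ => this a), Finset.sum_ite_eq, if_pos (Finset.mem_univ _)]
  rw [Finset.sum_congr rfl (fun q _ => h2 q), ← Finset.sum_filter]
  refine Finset.sum_nbij' (fun q => q ∘ Fin.castSucc) (fun i => Fin.snoc i (i 0))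
    (fun q _ => Finset.mem_univ _) ?_ ?_ ?_ ?_
  · intro i _
    simp only [Finset.mem_filter, Finset.mem_univ, true_and]
    show (Fin.snoc i (i 0) : Fin (k+1) → Fin 2) (Fin.last k)
        = (Fin.snoc i (i 0) : Fin (k+1) → Fin 2) 0
    rw [Fin.snoc_last]
    have h0 : ((0 : Fin (k+1))) = Fin.castSucc (0 : Fin k) := by ext; simp
    rw [h0, Fin.snoc_castSucc]
  · intro q hq
    simp only [Finset.mem_filter, Finset.mem_univ, true_and] at hq
    show Fin.snoc (q ∘ Fin.castSucc) ((q ∘ Fin.castSucc) 0) = q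
    exact snoc_eq k q hq
  · intro i _
    funext l
    show (Fin.snoc i (i 0) : Fin (k+1) → Fin 2) l.castSucc = i l
    rw [Fin.snoc_castSucc]
  · intro q hq
    simp only [Finset.mem_filter, Finset.mem_univ, true_and] at hq
    have hsnoc : (Fin.snoc (q ∘ Fin.castSucc) ((q ∘ Fin.castSucc) 0) : Fin (k+1) → Fin 2) = q :=
      snoc_eq k q hq
    refine Finset.prod_congr rfl fun l _ => ?_
    show M l (q l.castSucc) (q l.succ) = M l ((q ∘ Fin.castSucc) l) ((q ∘ Fin.castSucc) (l + 1))
    rw [← snoc_succ k (q ∘ Fin.castSucc) l, hsnoc]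
    rfl

lemma Binv_apply (B : Matrix (Fin 2) (Fin 2) ℂ) (h : B.det = 1) (a b : Fin 2) :
    B⁻¹ a b = (-1:ℂ)^((a:ℕ)+(b:ℕ)) * B (1-b) (1-a) := by
  rw [Matrix.inv_def, h, Ring.inverse_one, one_smul, Matrix.adjugate_fin_two]
  fin_cases a <;> fin_cases b <;> simp <;> rfl

/-- loop term in Kenyon's Pfaffian formula: for `k ≥ 1`, 2×2 complex
matrices `A₀,…,A_{k−1}` and `B₀,…,B_{k−1}` with `det Bₗ = 1`, the sum over all
`i, j : {0,…,k−1} → {0,1}` of `(−1)^{Σ(iₗ+jₗ)} ∏ₗ (Aₗ)_{iₗ,jₗ} (Bₗ)_{1−i_{l+1},1−jₗ}`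
(indices cyclic mod `k`) equals `tr(A₀B₀⁻¹A₁B₁⁻¹⋯A_{k−1}B_{k−1}⁻¹)`. -/
theorem loop_term_trace (k : ℕ) (hk : 1 ≤ k) [NeZero k]
    (A B : Fin k → Matrix (Fin 2) (Fin 2) ℂ) (hB : ∀ l, (B l).det = 1) :
    (∑ i : Fin k → Fin 2, ∑ j : Fin k → Fin 2,
      (-1 : ℂ) ^ (∑ l : Fin k, ((i l : ℕ) + (j l : ℕ))) *
        ∏ l : Fin k, (A l (i l) (j l) * B l (1 - i (l + 1)) (1 - j l)))
    = Matrix.trace (((List.finRange k).map (fun l => A l * (B l)⁻¹)).prod) := by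
  have hBval : ∀ (l : Fin k) (a b : Fin 2),
      B l (1 - a) (1 - b) = (-1:ℂ)^((b:ℕ)+(a:ℕ)) * (B l)⁻¹ b a := by
    intro l a b
    rw [Binv_apply (B l) (hB l) b a, ← mul_assoc, ← pow_add, Even.neg_one_pow ⟨(b:ℕ)+(a:ℕ), rfl⟩,
      one_mul]
  have step1 : ∀ (i j : Fin k → Fin 2),
      (-1 : ℂ) ^ (∑ l : Fin k, ((i l : ℕ) + (j l : ℕ))) *
        ∏ l : Fin k, (A l (i l) (j l) * B l (1 - i (l + 1)) (1 - j l))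
      = ∏ l : Fin k, (A l (i l) (j l) * (B l)⁻¹ (j l) (i (l + 1))) := by
    intro i j
    have hterm : ∀ l : Fin k,
        A l (i l) (j l) * B l (1 - i (l + 1)) (1 - j l)
        = (-1:ℂ)^((j l : ℕ) + (i (l+1) : ℕ)) * (A l (i l) (j l) * (B l)⁻¹ (j l) (i (l + 1))) := by
      intro l
      rw [hBval l (i (l+1)) (j l)]
      ring
    rw [Finset.prod_congr rfl (fun l _ => hterm l), Finset.prod_mul_distrib,
      Finset.prod_pow_eq_pow_sum, ← mul_assoc, ← pow_add]
    have hshift : ∑ l : Fin k, (i (l+1) : ℕ) = ∑ l : Fin k, (i l : ℕ) :=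
      Equiv.sum_comp (Equiv.addRight (1 : Fin k)) (fun l => (i l : ℕ))
    have heven : Even ((∑ l : Fin k, ((i l : ℕ) + (j l : ℕ)))
        + (∑ l : Fin k, ((j l : ℕ) + (i (l+1) : ℕ)))) := by
      rw [Finset.sum_add_distrib, Finset.sum_add_distrib, hshift]
      exact ⟨(∑ l : Fin k, (i l : ℕ)) + (∑ l : Fin k, (j l : ℕ)), by ring⟩
    rw [Even.neg_one_pow heven, one_mul]
  have step2 : ∀ i : Fin k → Fin 2,
      (∑ j : Fin k → Fin 2, ∏ l : Fin k, (A l (i l) (j l) * (B l)⁻¹ (j l) (i (l + 1))))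
      = ∏ l : Fin k, (A l * (B l)⁻¹) (i l) (i (l + 1)) := by
    intro i
    have := Finset.prod_univ_sum (fun _ : Fin k => (Finset.univ : Finset (Fin 2)))
      (fun l x => A l (i l) x * (B l)⁻¹ x (i (l + 1)))
    rw [Fintype.piFinset_univ] at this
    rw [← this]
    exact Finset.prod_congr rfl fun l _ => (Matrix.mul_apply).symm
  calc (∑ i : Fin k → Fin 2, ∑ j : Fin k → Fin 2,
      (-1 : ℂ) ^ (∑ l : Fin k, ((i l : ℕ) + (j l : ℕ))) *
        ∏ l : Fin k, (A l (i l) (j l) * B l (1 - i (l + 1)) (1 - j l)))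
      = ∑ i : Fin k → Fin 2, ∏ l : Fin k, (A l * (B l)⁻¹) (i l) (i (l + 1)) := by
        refine Finset.sum_congr rfl fun i _ => ?_
        rw [Finset.sum_congr rfl (fun j _ => step1 i j), step2 i]
    _ = Matrix.trace (((List.finRange k).map (fun l => A l * (B l)⁻¹)).prod) :=
        (trace_cyc k (fun l => A l * (B l)⁻¹)).symm
end

section
/- Let k ≥ 1, let A_0, …, A_{k−1} be 2×2 complex matrices, let B_0, …, B_{k−2} be 2×2 complex matrices with det(B_l) = 1 for every l, and let ψ, ψ′ ∈ ℂ². Then the sum over all functions r, s : {0,…,k−1} → {0,1} of (−1)^{Σ_l (r_l + s_l)} · ψ_{1−r_0} · (∏_{l=0}^{k−1} (A_l)_{r_l, s_l}) · (∏_{l=0}^{k−2} (B_l)_{1−r_{l+1}, 1−s_l}) · ψ′_{1−s_{k−1}} equals (Jψ)ᵀ · (A_0·B_0^{−1}·A_1·⋯·B_{k−2}^{−1}·A_{k−1}) · (Jψ′), where J is the 2×2 matrix with J_{0,1} = 1, J_{1,0} = −1 and zero diagonal. -/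
open Finset Matrix


lemma pi_one_sum (F : (Fin (0 + 1) → Fin 2) → ℂ) : (∑ r, F r) = ∑ a : Fin 2, F (fun _ => a) :=
  (Fintype.sum_equiv ((Equiv.funUnique (Fin 1) (Fin 2)).symm : Fin 2 ≃ (Fin (0 + 1) → Fin 2))
    _ _ (fun _ => rfl)).symm

lemma pi_succ_sum (k : ℕ) (F : (Fin (k + 1 + 1) → Fin 2) → ℂ) :
    (∑ r, F r) = ∑ r0 : Fin 2, ∑ r' : Fin (k + 1) → Fin 2, F (Fin.cons r0 r') :=
  calc ∑ r, F r = ∑ p : Fin 2 × (Fin (k + 1) → Fin 2), F (Fin.cons p.1 p.2) :=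
        (Fintype.sum_equiv (Fin.consEquiv fun _ => Fin 2) _ _ (fun _ => rfl)).symm
    _ = _ := Fintype.sum_prod_type (f := fun p : Fin 2 × (Fin (k + 1) → Fin 2) => F (Fin.cons p.1 p.2))

lemma inv_of_det_one (B : Matrix (Fin 2) (Fin 2) ℂ) (hB : B.det = 1) : B⁻¹ = B.adjugate := by
  rw [Matrix.inv_def, hB]; simp

lemma step (A B : Matrix (Fin 2) (Fin 2) ℂ) (hB : B.det = 1) (x : Fin 2 → ℂ) (a : Fin 2) :
    ∑ r0 : Fin 2, ∑ s0 : Fin 2,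
      x r0 * A r0 s0 * ((-1 : ℂ) ^ ((a : ℕ) + (s0 : ℕ)) * B (1 - a) (1 - s0))
    = vecMul x (A * B⁻¹) a := by
  rw [inv_of_det_one B hB, Matrix.adjugate_fin_two]
  fin_cases a <;>
    simp [Fin.sum_univ_succ, Matrix.vecMul, dotProduct, Matrix.mul_apply] <;> ring

lemma cons_A_prod (k : ℕ) (A : Fin (k + 1 + 1) → Matrix (Fin 2) (Fin 2) ℂ)
    (r0 s0 : Fin 2) (r' s' : Fin (k + 1) → Fin 2) :
    (∏ l : Fin (k + 1 + 1), A l ((Fin.cons r0 r' : Fin (k + 1 + 1) → Fin 2) l)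
        ((Fin.cons s0 s' : Fin (k + 1 + 1) → Fin 2) l))
    = A 0 r0 s0 * ∏ l : Fin (k + 1), A l.succ (r' l) (s' l) := by
  rw [Fin.prod_univ_succ]
  simp [Fin.cons_succ]

lemma cons_B_prod (k : ℕ) (B : Fin (k + 1) → Matrix (Fin 2) (Fin 2) ℂ)
    (r0 s0 : Fin 2) (r' s' : Fin (k + 1) → Fin 2) :
    (∏ l : Fin (k + 1),
      ((-1 : ℂ) ^ ((((Fin.cons r0 r' : Fin (k + 1 + 1) → Fin 2) l.succ : Fin 2) : ℕ) +
          (((Fin.cons s0 s' : Fin (k + 1 + 1) → Fin 2) l.castSucc : Fin 2) : ℕ)) *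
        B l (1 - (Fin.cons r0 r' : Fin (k + 1 + 1) → Fin 2) l.succ)
          (1 - (Fin.cons s0 s' : Fin (k + 1 + 1) → Fin 2) l.castSucc)))
    = ((-1 : ℂ) ^ ((r' 0 : ℕ) + (s0 : ℕ)) * B 0 (1 - r' 0) (1 - s0)) *
      ∏ l : Fin k, ((-1 : ℂ) ^ ((r' l.succ : ℕ) + ((s' l.castSucc : Fin 2) : ℕ)) *
        B l.succ (1 - r' l.succ) (1 - s' l.castSucc)) := by
  rw [Fin.prod_univ_succ]
  refine congrArg₂ (· * ·) (by simp) (Finset.prod_congr rfl fun m _ => ?_)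
  rw [← Fin.succ_castSucc]
  simp [Fin.cons_succ]

lemma cons_last (k : ℕ) (s0 : Fin 2) (s' : Fin (k + 1) → Fin 2) :
    (Fin.cons s0 s' : Fin (k + 1 + 1) → Fin 2) (Fin.last (k + 1)) = s' (Fin.last k) := by
  rw [← Fin.succ_last, Fin.cons_succ]

lemma swap4 {α : Type*} [Fintype α] (T : Fin 2 → α → Fin 2 → α → ℂ) :
    (∑ a : Fin 2, ∑ b : α, ∑ c : Fin 2, ∑ d : α, T a b c d)
    = ∑ b : α, ∑ d : α, ∑ a : Fin 2, ∑ c : Fin 2, T a b c d := by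
  rw [Finset.sum_comm]
  refine Finset.sum_congr rfl fun b _ => ?_
  calc (∑ a : Fin 2, ∑ c : Fin 2, ∑ d : α, T a b c d)
      = ∑ a : Fin 2, ∑ d : α, ∑ c : Fin 2, T a b c d :=
        Finset.sum_congr rfl fun a _ => Finset.sum_comm
    _ = _ := Finset.sum_comm

set_option maxHeartbeats 1000000 in
lemma aux (k : ℕ) : ∀ (A : Fin (k + 1) → Matrix (Fin 2) (Fin 2) ℂ)
    (B : Fin k → Matrix (Fin 2) (Fin 2) ℂ), (∀ l, (B l).det = 1) → ∀ (x y : Fin 2 → ℂ),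
    (∑ r : Fin (k + 1) → Fin 2, ∑ s : Fin (k + 1) → Fin 2,
      x (r 0) * (∏ l : Fin (k + 1), A l (r l) (s l)) *
        (∏ l : Fin k, ((-1 : ℂ) ^ ((r l.succ : ℕ) + (s l.castSucc : ℕ)) *
          B l (1 - r l.succ) (1 - s l.castSucc))) * y (s (Fin.last k)))
    = x ⬝ᵥ ((A 0 * ((List.finRange k).map (fun l => (B l)⁻¹ * A l.succ)).prod).mulVec y) := by
  induction k with
  | zero =>
    intro A B hB x y
    simp only [pi_one_sum]
    simp [Fin.sum_univ_succ, dotProduct, Matrix.mulVec]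
    ring
  | succ k ih =>
    intro A B hB x y
    simp only [pi_succ_sum, Fin.cons_zero, cons_A_prod, cons_B_prod, cons_last]
    rw [swap4 (α := Fin (k + 1) → Fin 2) (T := fun r0 r' s0 s' =>
      x r0 * (A 0 r0 s0 * ∏ l : Fin (k + 1), A l.succ (r' l) (s' l)) *
        (((-1 : ℂ) ^ ((r' 0 : ℕ) + (s0 : ℕ)) * B 0 (1 - r' 0) (1 - s0)) *
          ∏ l : Fin k, ((-1 : ℂ) ^ ((r' l.succ : ℕ) + ((s' l.castSucc : Fin 2) : ℕ)) *
            B l.succ (1 - r' l.succ) (1 - s' l.castSucc))) * y (s' (Fin.last k)))]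
    have inner : ∀ (PA PB Y : ℂ) (a : Fin 2),
        (∑ r0 : Fin 2, ∑ s0 : Fin 2, x r0 * (A 0 r0 s0 * PA) *
          (((-1 : ℂ) ^ ((a : ℕ) + (s0 : ℕ)) * B 0 (1 - a) (1 - s0)) * PB) * Y)
        = vecMul x (A 0 * (B 0)⁻¹) a * PA * PB * Y := by
      intro PA PB Y a
      rw [← step (A 0) (B 0) (hB 0) x a]
      simp only [Finset.sum_mul]
      exact Finset.sum_congr rfl fun r0 _ => Finset.sum_congr rfl fun s0 _ => by ring
    calc _ = ∑ r' : Fin (k + 1) → Fin 2, ∑ s' : Fin (k + 1) → Fin 2,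
            vecMul x (A 0 * (B 0)⁻¹) (r' 0) * (∏ l : Fin (k + 1), A l.succ (r' l) (s' l)) *
              (∏ l : Fin k, ((-1 : ℂ) ^ ((r' l.succ : ℕ) + ((s' l.castSucc : Fin 2) : ℕ)) *
                B l.succ (1 - r' l.succ) (1 - s' l.castSucc))) * y (s' (Fin.last k)) :=
          Finset.sum_congr rfl fun r' _ => Finset.sum_congr rfl fun s' _ =>
            inner _ _ _ (r' 0)
      _ = _ := by
          rw [ih (fun l => A l.succ) (fun l => B l.succ) (fun l => hB l.succ)
            (vecMul x (A 0 * (B 0)⁻¹)) y]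
          rw [List.finRange_succ, List.map_cons, List.prod_cons, List.map_map]
          rw [Matrix.dotProduct_mulVec, Matrix.dotProduct_mulVec, Matrix.vecMul_vecMul]
          congr 2
          simp only [Function.comp_def]
          noncomm_ring


lemma Jvec (ψ : Fin 2 → ℂ) (a : Fin 2) :
    ψ (1 - a) = (-1 : ℂ) ^ (a : ℕ) *
      ((!![0, 1; -1, 0] : Matrix (Fin 2) (Fin 2) ℂ).mulVec ψ) a := by
  fin_cases a <;> simp [Matrix.mulVec, dotProduct, Fin.sum_univ_succ]

lemma negsq (a : Fin 2) : (-1 : ℂ) ^ (a : ℕ) * (-1 : ℂ) ^ (a : ℕ) = 1 := by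
  fin_cases a <;> norm_num

lemma term_eq (k : ℕ)
    (A : Fin (k + 1) → Matrix (Fin 2) (Fin 2) ℂ)
    (B : Fin k → Matrix (Fin 2) (Fin 2) ℂ)
    (r s : Fin (k + 1) → Fin 2) (ψ ψ' : Fin 2 → ℂ) :
    (-1 : ℂ) ^ (∑ l : Fin (k + 1), ((r l : ℕ) + (s l : ℕ))) *
        (ψ (1 - r 0) * (∏ l : Fin (k + 1), A l (r l) (s l)) *
          (∏ l : Fin k, B l (1 - r l.succ) (1 - s l.castSucc)) * ψ' (1 - s (Fin.last k)))
    = ((!![0, 1; -1, 0] : Matrix (Fin 2) (Fin 2) ℂ).mulVec ψ) (r 0) *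
        (∏ l : Fin (k + 1), A l (r l) (s l)) *
        (∏ l : Fin k, ((-1 : ℂ) ^ ((r l.succ : ℕ) + (s l.castSucc : ℕ)) *
          B l (1 - r l.succ) (1 - s l.castSucc))) *
        ((!![0, 1; -1, 0] : Matrix (Fin 2) (Fin 2) ℂ).mulVec ψ') (s (Fin.last k)) := by
  have hexp : (∑ l : Fin (k + 1), ((r l : ℕ) + (s l : ℕ)))
      = ((r 0 : ℕ) + (s (Fin.last k) : ℕ)) +
        ∑ l : Fin k, ((r l.succ : ℕ) + (s l.castSucc : ℕ)) := by
    rw [Finset.sum_add_distrib, Finset.sum_add_distrib,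
      Fin.sum_univ_succ (f := fun l => (r l : ℕ)),
      Fin.sum_univ_castSucc (f := fun l => (s l : ℕ))]
    ring
  have hprod : (∏ l : Fin k, ((-1 : ℂ) ^ ((r l.succ : ℕ) + (s l.castSucc : ℕ)) *
        B l (1 - r l.succ) (1 - s l.castSucc)))
      = (-1 : ℂ) ^ (∑ l : Fin k, ((r l.succ : ℕ) + (s l.castSucc : ℕ))) *
        ∏ l : Fin k, B l (1 - r l.succ) (1 - s l.castSucc) := by
    rw [Finset.prod_mul_distrib, Finset.prod_pow_eq_pow_sum]
  rw [hexp, pow_add, pow_add, hprod, Jvec ψ (r 0), Jvec ψ' (s (Fin.last k))]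
  calc _ = ((-1 : ℂ) ^ (r 0 : ℕ) * (-1 : ℂ) ^ (r 0 : ℕ)) *
        (((-1 : ℂ) ^ (s (Fin.last k) : ℕ)) * ((-1 : ℂ) ^ (s (Fin.last k) : ℕ))) *
        (((!![0, 1; -1, 0] : Matrix (Fin 2) (Fin 2) ℂ).mulVec ψ) (r 0) *
          (∏ l : Fin (k + 1), A l (r l) (s l)) *
          ((-1 : ℂ) ^ (∑ l : Fin k, ((r l.succ : ℕ) + (s l.castSucc : ℕ))) *
            ∏ l : Fin k, B l (1 - r l.succ) (1 - s l.castSucc)) *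
          ((!![0, 1; -1, 0] : Matrix (Fin 2) (Fin 2) ℂ).mulVec ψ') (s (Fin.last k))) := by ring
    _ = _ := by rw [negsq, negsq]; ring

/-- arc term in Kenyon's Pfaffian formula: for `k+1` matrices
`A₀,…,A_k`, `k` matrices `B₀,…,B_{k−1}` of determinant `1`, and vectors `ψ, ψ′ ∈ ℂ²`,
the sum over all `r, s : {0,…,k} → {0,1}` of
`(−1)^{Σ(rₗ+sₗ)} ψ_{1−r₀} (∏ₗ (Aₗ)_{rₗ,sₗ}) (∏ₗ (Bₗ)_{1−r_{l+1},1−sₗ}) ψ′_{1−s_k}`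
equals `(Jψ)ᵀ (A₀B₀⁻¹A₁⋯B_{k−1}⁻¹A_k) (Jψ′)` with `J = [[0,1],[−1,0]]`. -/
theorem arc_term_bilinear (k : ℕ)
    (A : Fin (k + 1) → Matrix (Fin 2) (Fin 2) ℂ)
    (B : Fin k → Matrix (Fin 2) (Fin 2) ℂ) (hB : ∀ l, (B l).det = 1)
    (ψ ψ' : Fin 2 → ℂ) :
    (∑ r : Fin (k + 1) → Fin 2, ∑ s : Fin (k + 1) → Fin 2,
      (-1 : ℂ) ^ (∑ l : Fin (k + 1), ((r l : ℕ) + (s l : ℕ))) *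
        (ψ (1 - r 0) * (∏ l : Fin (k + 1), A l (r l) (s l)) *
          (∏ l : Fin k, B l (1 - r l.succ) (1 - s l.castSucc)) * ψ' (1 - s (Fin.last k))))
    =
    dotProduct ((!![0, 1; -1, 0] : Matrix (Fin 2) (Fin 2) ℂ).mulVec ψ)
      ((A 0 * ((List.finRange k).map (fun l => (B l)⁻¹ * A l.succ)).prod).mulVec
        ((!![0, 1; -1, 0] : Matrix (Fin 2) (Fin 2) ℂ).mulVec ψ')) := by
  rw [← aux k A B hB ((!![0, 1; -1, 0] : Matrix (Fin 2) (Fin 2) ℂ).mulVec ψ)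
    ((!![0, 1; -1, 0] : Matrix (Fin 2) (Fin 2) ℂ).mulVec ψ')]
  exact Finset.sum_congr rfl fun r _ => Finset.sum_congr rfl fun s _ => term_eq k A B r s ψ ψ'
end

section
/- For every real y with 0 < y < π/2, the double integral ∫_y^{π/2} ∫_y^{π/2} ( 1/sin((s+t)/2)² + 1/cos((s−t)/2)² ) ds dt equals −4·log(sin y). -/
open MeasureTheory intervalIntegral

private lemma inner_eval (y t : ℝ) (h0 : 0 < y) (h1 : y < Real.pi / 2)
    (ht : t ∈ Set.Icc y (Real.pi / 2)) :
    (∫ s in y..(Real.pi / 2),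
        (1 / Real.sin ((s + t) / 2) ^ 2 + 1 / Real.cos ((s - t) / 2) ^ 2))
      = 2 * (Real.cos ((t + y) / 2) / Real.sin ((t + y) / 2))
        + 2 * Real.tan ((t - y) / 2) := by
  have hy2 : y ≤ Real.pi / 2 := h1.le
  have huIcc : Set.uIcc y (Real.pi / 2) = Set.Icc y (Real.pi / 2) := Set.uIcc_of_le hy2
  have hne : ∀ s ∈ Set.Icc y (Real.pi / 2),
      Real.sin ((s + t) / 2) ≠ 0 ∧ Real.cos ((s - t) / 2) ≠ 0 := by
    intro s hs
    refine ⟨(Real.sin_pos_of_pos_of_lt_pi ?_ ?_).ne', (Real.cos_pos_of_mem_Ioo ⟨?_, ?_⟩).ne'⟩ <;>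
      · obtain ⟨hs1, hs2⟩ := hs
        obtain ⟨ht1, ht2⟩ := ht
        nlinarith [Real.pi_pos]
  have hderiv : ∀ s ∈ Set.uIcc y (Real.pi / 2),
      HasDerivAt (fun s => -2 * (Real.cos ((s + t) / 2) / Real.sin ((s + t) / 2))
          + 2 * Real.tan ((s - t) / 2))
        (1 / Real.sin ((s + t) / 2) ^ 2 + 1 / Real.cos ((s - t) / 2) ^ 2) s := by
    intro s hs
    rw [huIcc] at hs
    obtain ⟨hsin, hcos⟩ := hne s hs
    have hu : HasDerivAt (fun s : ℝ => (s + t) / 2) (1 / 2) s := by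
      simpa using ((hasDerivAt_id s).add_const t).div_const 2
    have hv : HasDerivAt (fun s : ℝ => (s - t) / 2) (1 / 2) s := by
      simpa using ((hasDerivAt_id s).sub_const t).div_const 2
    have hcos' : HasDerivAt (fun s : ℝ => Real.cos ((s + t) / 2))
        (-Real.sin ((s + t) / 2) * (1 / 2)) s :=
      (Real.hasDerivAt_cos _).comp s hu
    have hsin' : HasDerivAt (fun s : ℝ => Real.sin ((s + t) / 2))
        (Real.cos ((s + t) / 2) * (1 / 2)) s :=
      (Real.hasDerivAt_sin _).comp s hu
    have hc := (hcos'.div hsin' hsin).const_mul (-2 : ℝ)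
    have htan := ((Real.hasDerivAt_tan hcos).comp s hv).const_mul (2 : ℝ)
    convert hc.add htan using 1
    case e'_4 => rfl
    case e'_5 => rfl
    case e'_8 => rfl
    have hpyth := Real.sin_sq_add_cos_sq ((s + t) / 2)
    have h' : -Real.sin ((s + t) / 2) * (1 / 2) * Real.sin ((s + t) / 2)
        - Real.cos ((s + t) / 2) * (Real.cos ((s + t) / 2) * (1 / 2)) = -(1 / 2) := by
      linear_combination (-(1 : ℝ) / 2) * hpyth
    rw [h']
    ring
  have hcont : ContinuousOn
      (fun s => 1 / Real.sin ((s + t) / 2) ^ 2 + 1 / Real.cos ((s - t) / 2) ^ 2)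
      (Set.uIcc y (Real.pi / 2)) := by
    rw [huIcc]
    have ha1 : Continuous fun s : ℝ => (s + t) / 2 := by fun_prop
    have ha2 : Continuous fun s : ℝ => (s - t) / 2 := by fun_prop
    apply ContinuousOn.add
    · exact ContinuousOn.div continuousOn_const
        (((Real.continuous_sin.comp ha1).continuousOn).pow 2)
        (fun s hs => pow_ne_zero 2 (hne s hs).1)
    · exact ContinuousOn.div continuousOn_const
        (((Real.continuous_cos.comp ha2).continuousOn).pow 2)
        (fun s hs => pow_ne_zero 2 (hne s hs).2)
  rw [intervalIntegral.integral_eq_sub_of_hasDerivAt hderiv hcont.intervalIntegrable]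
  have e1 : (Real.pi / 2 - t) / 2 = Real.pi / 2 - (Real.pi / 2 + t) / 2 := by ring
  have key : Real.cos ((Real.pi / 2 + t) / 2) / Real.sin ((Real.pi / 2 + t) / 2)
      = Real.tan ((Real.pi / 2 - t) / 2) := by
    rw [Real.tan_eq_sin_div_cos, e1, Real.sin_pi_div_two_sub, Real.cos_pi_div_two_sub]
  have e2 : (y - t) / 2 = -((t - y) / 2) := by ring
  have e3 : (y + t) / 2 = (t + y) / 2 := by ring
  rw [e2, Real.tan_neg, e3, key]
  ring

/-- for `0 < y < π/2`,
`∫_y^{π/2} ∫_y^{π/2} (1/sin((s+t)/2)² + 1/cos((s−t)/2)²) ds dt = −4 log(sin y)`. -/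
theorem strip_double_integral (y : ℝ) (h0 : 0 < y) (h1 : y < Real.pi / 2) :
    (∫ t in y..(Real.pi / 2), ∫ s in y..(Real.pi / 2),
        (1 / Real.sin ((s + t) / 2) ^ 2 + 1 / Real.cos ((s - t) / 2) ^ 2))
      = -4 * Real.log (Real.sin y) := by
  have hy2 : y ≤ Real.pi / 2 := h1.le
  have huIcc : Set.uIcc y (Real.pi / 2) = Set.Icc y (Real.pi / 2) := Set.uIcc_of_le hy2
  have key : (∫ t in y..(Real.pi / 2), ∫ s in y..(Real.pi / 2),
        (1 / Real.sin ((s + t) / 2) ^ 2 + 1 / Real.cos ((s - t) / 2) ^ 2))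
      = ∫ t in y..(Real.pi / 2),
        (2 * (Real.cos ((t + y) / 2) / Real.sin ((t + y) / 2))
          + 2 * Real.tan ((t - y) / 2)) := by
    apply intervalIntegral.integral_congr
    intro t ht
    rw [huIcc] at ht
    exact inner_eval y t h0 h1 ht
  rw [key]
  have hne : ∀ t ∈ Set.Icc y (Real.pi / 2),
      Real.sin ((t + y) / 2) ≠ 0 ∧ Real.cos ((t - y) / 2) ≠ 0 := by
    intro t hti
    refine ⟨(Real.sin_pos_of_pos_of_lt_pi ?_ ?_).ne', (Real.cos_pos_of_mem_Ioo ⟨?_, ?_⟩).ne'⟩ <;>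
      · obtain ⟨ht1, ht2⟩ := hti
        nlinarith [Real.pi_pos]
  have hderiv : ∀ t ∈ Set.uIcc y (Real.pi / 2),
      HasDerivAt (fun t => 4 * Real.log (Real.sin ((t + y) / 2))
          - 4 * Real.log (Real.cos ((t - y) / 2)))
        (2 * (Real.cos ((t + y) / 2) / Real.sin ((t + y) / 2))
          + 2 * Real.tan ((t - y) / 2)) t := by
    intro t hti
    rw [huIcc] at hti
    obtain ⟨hsin, hcos⟩ := hne t hti
    have hu : HasDerivAt (fun t : ℝ => (t + y) / 2) (1 / 2) t := by
      simpa using ((hasDerivAt_id t).add_const y).div_const 2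
    have hv : HasDerivAt (fun t : ℝ => (t - y) / 2) (1 / 2) t := by
      simpa using ((hasDerivAt_id t).sub_const y).div_const 2
    have hs0 : HasDerivAt (fun t : ℝ => Real.sin ((t + y) / 2))
        (Real.cos ((t + y) / 2) * (1 / 2)) t := (Real.hasDerivAt_sin _).comp t hu
    have hc0 : HasDerivAt (fun t : ℝ => Real.cos ((t - y) / 2))
        (-Real.sin ((t - y) / 2) * (1 / 2)) t := (Real.hasDerivAt_cos _).comp t hv
    have hs' := (hs0.log hsin).const_mul (4 : ℝ)
    have hc' := (hc0.log hcos).const_mul (4 : ℝ)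
    convert hs'.sub hc' using 1
    case e'_4 => rfl
    case e'_5 => rfl
    case e'_8 => rfl
    rw [Real.tan_eq_sin_div_cos]
    field_simp
    ring
  have hcont : ContinuousOn
      (fun t => 2 * (Real.cos ((t + y) / 2) / Real.sin ((t + y) / 2))
        + 2 * Real.tan ((t - y) / 2)) (Set.uIcc y (Real.pi / 2)) := by
    rw [huIcc]
    have ha1 : Continuous fun t : ℝ => (t + y) / 2 := by fun_prop
    have ha2 : Continuous fun t : ℝ => (t - y) / 2 := by fun_prop
    have c1 : ContinuousOn (fun t => Real.cos ((t + y) / 2) / Real.sin ((t + y) / 2))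
        (Set.Icc y (Real.pi / 2)) :=
      ContinuousOn.div ((Real.continuous_cos.comp ha1).continuousOn)
        ((Real.continuous_sin.comp ha1).continuousOn)
        (fun t hti => (hne t hti).1)
    have c2 : ContinuousOn (fun t => Real.sin ((t - y) / 2) / Real.cos ((t - y) / 2))
        (Set.Icc y (Real.pi / 2)) :=
      ContinuousOn.div ((Real.continuous_sin.comp ha2).continuousOn)
        ((Real.continuous_cos.comp ha2).continuousOn)
        (fun t hti => (hne t hti).2)
    have heq : (fun t => 2 * (Real.cos ((t + y) / 2) / Real.sin ((t + y) / 2))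
        + 2 * Real.tan ((t - y) / 2))
        = fun t => 2 * (Real.cos ((t + y) / 2) / Real.sin ((t + y) / 2))
          + 2 * (Real.sin ((t - y) / 2) / Real.cos ((t - y) / 2)) := by
      funext t; rw [Real.tan_eq_sin_div_cos]
    rw [heq]
    exact (continuousOn_const.mul c1).add (continuousOn_const.mul c2)
  rw [intervalIntegral.integral_eq_sub_of_hasDerivAt hderiv hcont.intervalIntegrable]
  have e1 : (Real.pi / 2 - y) / 2 = Real.pi / 2 - (Real.pi / 2 + y) / 2 := by ring
  have e2 : (y + y) / 2 = y := by ring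
  have e3 : (y - y) / 2 = 0 := by ring
  rw [e1, Real.cos_pi_div_two_sub, e2, e3, Real.cos_zero, Real.log_one]
  ring
end
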